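/- Let X = ℝ^d with Lebesgue measure, ψ ∈ Ψ(a,b), ζ, ν ∈ EΨ(a,b), ζ = ψ·ν. Then, as A ranges over non-degenerate d×d matrices, lim_{|det A| → ∞} (log ‖D_A‖(G(ψ)→G(ζ)))/(log |det A|) = 1/a and lim_{|det A| → 0} (log ‖D_A‖(G(ψ)→G(ζ)))/(log |det A|) = 1/b. -/

import Mathlib

noncomputable section

open MeasureTheory Filter Set Topology
open scoped ENNReal NNReal

/-- The set of exponents `p` with `a < p < b` (where `b : ℝ≥0∞` may be `∞`). -/
def expSet (a : ℝ) (b : ℝ≥0∞) : Set ℝ := {p : ℝ | a < p ∧ ENNReal.ofReal p < b}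

/-- The filter of real exponents `p` tending to `b` from below (`p → b⁻`);
when `b = ∞` this amounts to `p → ∞`. -/
def atBbelow (b : ℝ≥0∞) : Filter ℝ :=
  Filter.comap ENNReal.ofReal (nhdsWithin b (Set.Iio b))

/-- The class `EΨ(a,b)`: continuous `ψ` on `(a,b)` with `ψ(p) ≥ 1` and `ψ(b-0) = ∞`. -/
def IsEPsi (a : ℝ) (b : ℝ≥0∞) (ψ : ℝ → ℝ) : Prop :=
  ContinuousOn ψ (expSet a b) ∧ (∀ p ∈ expSet a b, 1 ≤ ψ p) ∧
    Filter.Tendsto ψ (atBbelow b) Filter.atTop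

/-- Norm of the Bilateral Grand Lebesgue space `G(ψ; a, b)` over a measure `μ`:
`‖f‖_{G(ψ)} = sup_{p ∈ (a,b)} ‖f‖_{L^p(μ)} / ψ(p)`, with values in `ℝ≥0∞`. -/
def GNorm {α : Type*} [MeasurableSpace α] (μ : Measure α) (a : ℝ) (b : ℝ≥0∞)
    (ψ : ℝ → ℝ) (f : α → ℝ) : ℝ≥0∞ :=
  ⨆ p ∈ expSet a b, eLpNorm f (ENNReal.ofReal p) μ / ENNReal.ofReal (ψ p)

/-- The class `Ψ(a,b)` (relative to a measure `μ`): positive continuous `ψ` on `(a,b)`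
with `ψ(b-0) = ∞`, admitting a representation `ψ(p) = ‖f‖_{L^p(μ)}` for `p ∈ (a,b)`, where
the measurable `f` lies in `L^p(μ)` for all `p ∈ (a,b)`. -/
def IsPsi {α : Type*} [MeasurableSpace α] (μ : Measure α) (a : ℝ) (b : ℝ≥0∞)
    (ψ : ℝ → ℝ) : Prop :=
  ContinuousOn ψ (expSet a b) ∧ (∀ p ∈ expSet a b, 0 < ψ p) ∧
    Filter.Tendsto ψ (atBbelow b) Filter.atTop ∧
    ∃ f : α → ℝ, AEStronglyMeasurable f μ ∧
      ∀ p ∈ expSet a b, eLpNorm f (ENNReal.ofReal p) μ = ENNReal.ofReal (ψ p)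

/-- The fundamental function `φ(G(ψ;a,b), s) = sup_{p ∈ (a,b)} s^{1/p}/ψ(p)`, real-valued. -/
def fundR (a : ℝ) (b : ℝ≥0∞) (ψ : ℝ → ℝ) (s : ℝ) : ℝ :=
  ⨆ p : expSet a b, s ^ (1 / (p : ℝ)) / ψ p

/-- The fundamental function `φ(G(ψ;a,b), δ) = sup_{p ∈ (a,b)} δ^{1/p}/ψ(p)`, `ℝ≥0∞`-valued. -/
def fundE (a : ℝ) (b : ℝ≥0∞) (ψ : ℝ → ℝ) (δ : ℝ≥0∞) : ℝ≥0∞ :=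
  ⨆ p ∈ expSet a b, δ ^ (1 / p) / ENNReal.ofReal (ψ p)

/-- The matrix dilation operator `(D_A f)(x) = f(A⁻¹ x)` on functions on `ℝ^n`. -/
def matDilate {n : ℕ} (A : Matrix (Fin n) (Fin n) ℝ) (f : (Fin n → ℝ) → ℝ) :
    (Fin n → ℝ) → ℝ := fun x => f (A⁻¹.mulVec x)

/-- The operator norm `‖D_A‖(G(ψ, μ) → G(ζ, μ))` of the matrix dilation operator. -/
def matOpNorm {n : ℕ} (μ : Measure (Fin n → ℝ)) (a : ℝ) (b : ℝ≥0∞) (ψ ζ : ℝ → ℝ)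
    (A : Matrix (Fin n) (Fin n) ℝ) : ℝ≥0∞ :=
  ⨆ f : {f : (Fin n → ℝ) → ℝ // AEStronglyMeasurable f μ},
    GNorm μ a b ζ (matDilate A f.1) / GNorm μ a b ψ f.1


/-! The change of variables `x ↦ A⁻¹x` gives `‖D_A f‖_p = |det A|^{1/p} ‖f‖_p`, so
`‖D_A f‖_{G(ζ)} ≤ φ(G(ν), |det A|) ‖f‖_{G(ψ)}` because `ζ = ψν`; the function representing `ψ`
has `G(ψ)`-norm one and attains this bound, so `‖D_A‖ = φ(G(ν), |det A|)`.
Since `ν ≥ 1`, `δ^{1/p}/ν(p) ≤ φ(G(ν), δ) ≤ max(δ^{1/a}, δ^{1/b})` for every `p ∈ (a,b)`, and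
`1/p` can be taken arbitrarily close to `1/a` or to `1/b`; hence `log φ(δ) / log δ` tends to
`1/a` as `δ → ∞` and to `1/b` as `δ → 0`. -/

theorem tendsto_log_div_log_of_le_rpow {l : Filter ℝ} {F : ℝ → ℝ} {L : ℝ}
    (hl : Tendsto (fun s => |Real.log s|) l atTop) (hpos : ∀ᶠ s in l, 0 < s)
    (hupper : ∀ᶠ s in l, F s ≤ s ^ L)
    (hlower : ∀ ε > 0, ∃ α, |α - L| < ε ∧ ∃ C > 0, ∀ᶠ s in l, C * s ^ α ≤ F s) :
    Tendsto (fun s => Real.log (F s) / Real.log s) l (𝓝 L) := by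
  rw [Metric.tendsto_nhds]
  intro ε hε
  obtain ⟨α, hα, C, hC, hlow⟩ := hlower (ε / 2) (half_pos hε)
  filter_upwards [hpos, hupper, hlow, hl.eventually_gt_atTop (2 * |Real.log C| / ε)]
    with s hs hup hlo hlog
  have hlog0 : 0 < |Real.log s| := lt_of_le_of_lt (by positivity) hlog
  have hsα : 0 < s ^ α := Real.rpow_pos_of_pos hs α
  have hle : Real.log (F s) ≤ L * Real.log s := by
    rw [← Real.log_rpow hs]
    exact Real.log_le_log ((mul_pos hC hsα).trans_le hlo) hup
  have hge : Real.log C + α * Real.log s ≤ Real.log (F s) := by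
    rw [← Real.log_rpow hs, ← Real.log_mul hC.ne' hsα.ne']
    exact Real.log_le_log (mul_pos hC hsα) hlo
  have hC_small : |Real.log C| < ε / 2 * |Real.log s| := by
    rw [div_lt_iff₀ hε] at hlog
    linarith
  have hα_small : |α - L| * |Real.log s| ≤ ε / 2 * |Real.log s| := by gcongr
  have hdev : |Real.log (F s) - L * Real.log s| < ε * |Real.log s| := by
    have := neg_abs_le ((α - L) * Real.log s)
    rw [abs_mul] at this
    rw [abs_sub_lt_iff]
    constructor <;> nlinarith [neg_abs_le (Real.log C)]
  have hquot : Real.log (F s) / Real.log s - L =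
      (Real.log (F s) - L * Real.log s) / Real.log s := by
    field_simp [abs_pos.1 hlog0]
  rw [Real.dist_eq, hquot, abs_div, div_lt_iff₀ hlog0]
  exact hdev

theorem eLpNorm_matDilate {n : ℕ} {A : Matrix (Fin n) (Fin n) ℝ} (hA : A.det ≠ 0)
    {f : (Fin n → ℝ) → ℝ} (hf : AEStronglyMeasurable f volume) (p : ℝ≥0∞) :
    eLpNorm (matDilate A f) p volume =
      ENNReal.ofReal |A.det| ^ (1 / p).toReal * eLpNorm f p volume := by
  classical
  have hdet_inv : (A⁻¹).det ≠ 0 := by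
    rw [Matrix.det_nonsing_inv, Ring.inverse_eq_inv']
    exact inv_ne_zero hA
  have hmap : Measure.map (Matrix.toLin' A⁻¹) volume = ENNReal.ofReal |A.det| • volume := by
    rw [Real.map_matrix_volume_pi_eq_smul_volume_pi hdet_inv, Matrix.det_nonsing_inv,
      Ring.inverse_eq_inv', inv_inv]
  have hfmap : AEStronglyMeasurable f (Measure.map (Matrix.toLin' A⁻¹) volume) := by
    rw [hmap]
    exact hf.mono_ac Measure.smul_absolutelyContinuous
  have hdilate : matDilate A f = f ∘ Matrix.toLin' A⁻¹ := by
    funext x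
    simp [matDilate, Matrix.toLin'_apply]
  rw [hdilate, ← eLpNorm_map_measure hfmap
      (LinearMap.continuous_on_pi _).measurable.aemeasurable, hmap,
    eLpNorm_smul_measure_of_ne_zero (ENNReal.ofReal_pos.2 (abs_pos.2 hA)).ne', smul_eq_mul]

section GrandLebesgue

variable {a : ℝ} {b : ℝ≥0∞}

theorem pos_of_mem_expSet (ha : 0 ≤ a) {p : ℝ} (hp : p ∈ expSet a b) : 0 < p :=
  ha.trans_lt hp.1

theorem expSet_mem_nhdsGT (hab : ENNReal.ofReal a < b) : expSet a b ∈ 𝓝[>] a :=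
  inter_mem self_mem_nhdsWithin <| nhdsWithin_le_nhds <|
    (isOpen_Iio.preimage ENNReal.continuous_ofReal).mem_nhds hab

theorem expSet_nonempty (hab : ENNReal.ofReal a < b) : (expSet a b).Nonempty :=
  Filter.nonempty_of_mem (expSet_mem_nhdsGT hab)

theorem expSet_mem_atBbelow (hab : ENNReal.ofReal a < b) : expSet a b ∈ atBbelow b :=
  ⟨Ioo (ENNReal.ofReal a) b, Ioo_mem_nhdsLT hab,
    fun _ hp => ⟨(ENNReal.ofReal_lt_ofReal_iff'.1 hp.1).1, hp.2⟩⟩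

theorem atBbelow_neBot (hb : b ≠ 0) : (atBbelow b).NeBot :=
  NeBot.comap_of_range_mem (nhdsLT_neBot_of_exists_lt ⟨0, pos_iff_ne_zero.2 hb⟩) <|
    mem_of_superset self_mem_nhdsWithin fun x hx => ⟨x.toReal, ENNReal.ofReal_toReal hx.ne_top⟩

theorem tendsto_one_div_atBbelow (hb : b ≠ 0) :
    Tendsto (fun p : ℝ => 1 / p) (atBbelow b) (𝓝 b⁻¹.toReal) := by
  have hpos : ∀ᶠ p : ℝ in atBbelow b, 0 < p :=
    ⟨Ioo 0 b, Ioo_mem_nhdsLT (pos_iff_ne_zero.2 hb), fun _ hp => ENNReal.ofReal_pos.1 hp.1⟩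
  -- Inverting in `ℝ≥0∞` treats `b = ∞` (where `b⁻¹.toReal = 0`) and finite `b` alike.
  have hlim : Tendsto (fun p : ℝ => (ENNReal.ofReal p)⁻¹.toReal) (atBbelow b) (𝓝 b⁻¹.toReal) :=
    (ENNReal.tendsto_toReal (ENNReal.inv_ne_top.2 hb)).comp <|
      (continuous_inv.tendsto b).comp (tendsto_comap.mono_right nhdsWithin_le_nhds)
  refine hlim.congr' (hpos.mono fun p hp => ?_)
  rw [ENNReal.toReal_inv, ENNReal.toReal_ofReal hp.le, ← one_div]

theorem one_div_mem_closure_image_expSet (ha : 0 < a) (hab : ENNReal.ofReal a < b) :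
    1 / a ∈ closure ((fun p => 1 / p) '' expSet a b) := by
  have hlim : Tendsto (fun p : ℝ => 1 / p) (𝓝[>] a) (𝓝 (1 / a)) :=
    (tendsto_const_nhds.div tendsto_id ha.ne').mono_left nhdsWithin_le_nhds
  exact mem_closure_of_tendsto hlim <|
    Filter.mem_of_superset (expSet_mem_nhdsGT hab) fun p hp => mem_image_of_mem _ hp

theorem inv_toReal_mem_closure_image_expSet (hab : ENNReal.ofReal a < b) :
    b⁻¹.toReal ∈ closure ((fun p => 1 / p) '' expSet a b) := by
  have hb : b ≠ 0 := (hab.trans_le' bot_le).ne'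
  have := atBbelow_neBot hb
  exact mem_closure_of_tendsto (tendsto_one_div_atBbelow hb) <|
    Filter.mem_of_superset (expSet_mem_atBbelow hab) fun p hp => mem_image_of_mem _ hp

end GrandLebesgue

section FundamentalFunction

variable {a : ℝ} {b : ℝ≥0∞} {ν : ℝ → ℝ}

theorem div_le_fundE {p : ℝ} (hp : p ∈ expSet a b) (δ : ℝ≥0∞) :
    δ ^ (1 / p) / ENNReal.ofReal (ν p) ≤ fundE a b ν δ :=
  le_iSup₂ (f := fun p (_ : p ∈ expSet a b) => δ ^ (1 / p) / ENNReal.ofReal (ν p)) p hp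

theorem fundE_le_of_forall_le {δ M : ℝ≥0∞} (hν : ∀ p ∈ expSet a b, 1 ≤ ν p)
    (hM : ∀ p ∈ expSet a b, δ ^ (1 / p) ≤ M) : fundE a b ν δ ≤ M :=
  iSup₂_le fun p hp => (ENNReal.div_le_of_le_mul (le_mul_of_one_le_right'
    (ENNReal.one_le_ofReal.2 (hν p hp)))).trans (hM p hp)

theorem inv_toReal_le_one_div (ha : 0 ≤ a) {p : ℝ} (hp : p ∈ expSet a b) :
    b⁻¹.toReal ≤ 1 / p := by
  have hp0 : 0 < p := pos_of_mem_expSet ha hp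
  have hinv : b⁻¹ ≤ (ENNReal.ofReal p)⁻¹ := ENNReal.inv_le_inv.2 hp.2.le
  have := ENNReal.toReal_mono (ENNReal.inv_ne_top.2 (ENNReal.ofReal_pos.2 hp0).ne') hinv
  exact this.trans_eq (by rw [ENNReal.toReal_inv, ENNReal.toReal_ofReal hp0.le, one_div])

theorem fundE_le_rpow_one_div (ha : 0 < a) (hν : ∀ p ∈ expSet a b, 1 ≤ ν p) {δ : ℝ≥0∞}
    (hδ : 1 ≤ δ) : fundE a b ν δ ≤ δ ^ (1 / a) :=
  fundE_le_of_forall_le hν fun _ hp =>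
    ENNReal.rpow_le_rpow_of_exponent_le hδ (one_div_le_one_div_of_le ha hp.1.le)

theorem fundE_le_rpow_inv_toReal (ha : 0 ≤ a) (hν : ∀ p ∈ expSet a b, 1 ≤ ν p) {δ : ℝ≥0∞}
    (hδ : δ ≤ 1) : fundE a b ν δ ≤ δ ^ b⁻¹.toReal :=
  fundE_le_of_forall_le hν fun _ hp =>
    ENNReal.rpow_le_rpow_of_exponent_ge hδ (inv_toReal_le_one_div ha hp)

theorem rpow_div_le_toReal_fundE (hν : ∀ p ∈ expSet a b, 1 ≤ ν p) {s M : ℝ}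
    (hs : 0 < s) (hM : fundE a b ν (ENNReal.ofReal s) ≤ ENNReal.ofReal M) {p : ℝ}
    (hp : p ∈ expSet a b) : s ^ (1 / p) / ν p ≤ (fundE a b ν (ENNReal.ofReal s)).toReal := by
  have := ENNReal.toReal_mono (hM.trans_lt ENNReal.ofReal_lt_top).ne (div_le_fundE hp _)
  rwa [ENNReal.toReal_div, ENNReal.ofReal_rpow_of_pos hs, ENNReal.toReal_ofReal
    (Real.rpow_nonneg hs.le _), ENNReal.toReal_ofReal (zero_le_one.trans (hν p hp))] at this

theorem tendsto_log_fundE_div_log {l : Filter ℝ} {L : ℝ}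
    (hν : ∀ p ∈ expSet a b, 1 ≤ ν p) (hl : Tendsto (fun s => |Real.log s|) l atTop)
    (hpos : ∀ᶠ s in l, 0 < s)
    (hupper : ∀ᶠ s in l, fundE a b ν (ENNReal.ofReal s) ≤ ENNReal.ofReal (s ^ L))
    (hL : L ∈ closure ((fun p => 1 / p) '' expSet a b)) :
    Tendsto (fun s => Real.log (fundE a b ν (ENNReal.ofReal s)).toReal / Real.log s) l
      (𝓝 L) := by
  refine tendsto_log_div_log_of_le_rpow hl hpos ?_ fun ε hε => ?_
  · filter_upwards [hpos, hupper] with s hs hup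
    exact ENNReal.toReal_le_of_le_ofReal (Real.rpow_nonneg hs.le _) hup
  · obtain ⟨_, ⟨p, hp, rfl⟩, hdist⟩ := Metric.mem_closure_iff.1 hL ε hε
    refine ⟨1 / p, by rwa [← Real.dist_eq, dist_comm], 1 / ν p,
      one_div_pos.2 (zero_lt_one.trans_le (hν p hp)), ?_⟩
    filter_upwards [hpos, hupper] with s hs hup
    rw [one_div_mul_eq_div]
    exact rpow_div_le_toReal_fundE hν hs hup hp

theorem tendsto_log_fundE_div_log_atTop (ha : 0 < a) (hab : ENNReal.ofReal a < b)
    (hν : ∀ p ∈ expSet a b, 1 ≤ ν p) :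
    Tendsto (fun s => Real.log (fundE a b ν (ENNReal.ofReal s)).toReal / Real.log s) atTop
      (𝓝 (1 / a)) :=
  tendsto_log_fundE_div_log hν (tendsto_abs_atTop_atTop.comp Real.tendsto_log_atTop)
    (eventually_gt_atTop 0)
    ((eventually_ge_atTop 1).mono fun _ hs =>
      (fundE_le_rpow_one_div ha hν (ENNReal.one_le_ofReal.2 hs)).trans_eq
        (ENNReal.ofReal_rpow_of_pos (zero_lt_one.trans_le hs)))
    (one_div_mem_closure_image_expSet ha hab)

theorem tendsto_log_fundE_div_log_nhdsGT_zero (ha : 0 ≤ a) (hab : ENNReal.ofReal a < b)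
    (hν : ∀ p ∈ expSet a b, 1 ≤ ν p) :
    Tendsto (fun s => Real.log (fundE a b ν (ENNReal.ofReal s)).toReal / Real.log s)
      (𝓝[>] 0) (𝓝 b⁻¹.toReal) :=
  tendsto_log_fundE_div_log hν (tendsto_abs_atBot_atTop.comp Real.tendsto_log_nhdsGT_zero)
    self_mem_nhdsWithin
    (Filter.mem_of_superset (Ioo_mem_nhdsGT zero_lt_one) fun _ hs =>
      (fundE_le_rpow_inv_toReal ha hν (ENNReal.ofReal_le_one.2 hs.2.le)).trans_eq
        (ENNReal.ofReal_rpow_of_pos hs.1))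
    (inv_toReal_mem_closure_image_expSet hab)

end FundamentalFunction

section OperatorNorm

variable {a : ℝ} {b : ℝ≥0∞} {ψ : ℝ → ℝ}

theorem GNorm_eq_one_of_eLpNorm_eq {α : Type*} [MeasurableSpace α] {μ : Measure α}
    {f : α → ℝ} (hne : (expSet a b).Nonempty) (hψ : ∀ p ∈ expSet a b, 0 < ψ p)
    (hf : ∀ p ∈ expSet a b, eLpNorm f (ENNReal.ofReal p) μ = ENNReal.ofReal (ψ p)) :
    GNorm μ a b ψ f = 1 :=
  calc GNorm μ a b ψ f = ⨆ p ∈ expSet a b, (1 : ℝ≥0∞) :=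
        iSup_congr fun p => iSup_congr fun hp => by
          rw [hf p hp, ENNReal.div_self (ENNReal.ofReal_pos.2 (hψ p hp)).ne' ENNReal.ofReal_ne_top]
    _ = 1 := biSup_const hne

variable {ζ ν : ℝ → ℝ} {n : ℕ} {A : Matrix (Fin n) (Fin n) ℝ}

theorem GNorm_matDilate (ha : 0 ≤ a) (hψ : ∀ p ∈ expSet a b, 0 < ψ p)
    (hmul : ∀ p ∈ expSet a b, ζ p = ψ p * ν p) (hA : A.det ≠ 0)
    {f : (Fin n → ℝ) → ℝ} (hf : AEStronglyMeasurable f volume) :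
    GNorm volume a b ζ (matDilate A f) =
      ⨆ p ∈ expSet a b, ENNReal.ofReal |A.det| ^ (1 / p) / ENNReal.ofReal (ν p) *
        (eLpNorm f (ENNReal.ofReal p) volume / ENNReal.ofReal (ψ p)) :=
  iSup_congr fun p => iSup_congr fun hp => by
    rw [eLpNorm_matDilate hA hf, one_div, ENNReal.toReal_inv,
      ENNReal.toReal_ofReal (pos_of_mem_expSet ha hp).le, ← one_div, hmul p hp,
      ENNReal.ofReal_mul (hψ p hp).le, mul_comm (ENNReal.ofReal (ψ p)),
      ENNReal.mul_div_mul_comm (Or.inr ENNReal.ofReal_ne_top) (Or.inl ENNReal.ofReal_ne_top)]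

theorem matOpNorm_eq_fundE (ha : 0 ≤ a) (hne : (expSet a b).Nonempty)
    (hψ : ∀ p ∈ expSet a b, 0 < ψ p)
    (hrep : ∃ f : (Fin n → ℝ) → ℝ, AEStronglyMeasurable f volume ∧
      ∀ p ∈ expSet a b, eLpNorm f (ENNReal.ofReal p) volume = ENNReal.ofReal (ψ p))
    (hmul : ∀ p ∈ expSet a b, ζ p = ψ p * ν p) (hA : A.det ≠ 0) :
    matOpNorm volume a b ψ ζ A = fundE a b ν (ENNReal.ofReal |A.det|) := by
  refine le_antisymm (iSup_le fun f => ENNReal.div_le_of_le_mul ?_) ?_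
  · rw [GNorm_matDilate ha hψ hmul hA f.2]
    exact iSup₂_le fun p hp => mul_le_mul' (div_le_fundE hp _)
      (le_iSup₂ (f := fun p (_ : p ∈ expSet a b) =>
        eLpNorm f.1 (ENNReal.ofReal p) volume / ENNReal.ofReal (ψ p)) p hp)
  · obtain ⟨f₀, hf₀, hψf₀⟩ := hrep
    calc fundE a b ν (ENNReal.ofReal |A.det|)
        = GNorm volume a b ζ (matDilate A f₀) / GNorm volume a b ψ f₀ := by
          rw [GNorm_eq_one_of_eLpNorm_eq hne hψ hψf₀, div_one, GNorm_matDilate ha hψ hmul hA hf₀]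
          refine iSup_congr fun p => iSup_congr fun hp => ?_
          rw [hψf₀ p hp, ENNReal.div_self (ENNReal.ofReal_pos.2 (hψ p hp)).ne'
            ENNReal.ofReal_ne_top, mul_one]
      _ ≤ matOpNorm volume a b ψ ζ A :=
          le_iSup (fun f : {f : (Fin n → ℝ) → ℝ // AEStronglyMeasurable f volume} =>
            GNorm volume a b ζ (matDilate A f.1) / GNorm volume a b ψ f.1) ⟨f₀, hf₀⟩

end OperatorNorm

theorem matrix_dilation_log_opNorm_limits_general (n : ℕ)
    (a : ℝ) (b : ℝ≥0∞) (ha : 1 ≤ a) (hab : ENNReal.ofReal a < b)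
    (ψ ζ ν : ℝ → ℝ) (hψ : IsPsi (volume : Measure (Fin n → ℝ)) a b ψ)
    (hν : IsEPsi a b ν)
    (hmul : ∀ p ∈ expSet a b, ζ p = ψ p * ν p) :
    Tendsto
        (fun A : {A : Matrix (Fin n) (Fin n) ℝ // A.det ≠ 0} =>
          Real.log ((matOpNorm (volume : Measure (Fin n → ℝ)) a b ψ ζ A.1).toReal) /
            Real.log |A.1.det|)
        (Filter.comap (fun A : {A : Matrix (Fin n) (Fin n) ℝ // A.det ≠ 0} => |A.1.det|)
          atTop)
        (𝓝 (1 / a)) ∧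
      Tendsto
        (fun A : {A : Matrix (Fin n) (Fin n) ℝ // A.det ≠ 0} =>
          Real.log ((matOpNorm (volume : Measure (Fin n → ℝ)) a b ψ ζ A.1).toReal) /
            Real.log |A.1.det|)
        (Filter.comap (fun A : {A : Matrix (Fin n) (Fin n) ℝ // A.det ≠ 0} => |A.1.det|)
          (𝓝[>] (0 : ℝ)))
        (𝓝 (b⁻¹.toReal)) := by
  obtain ⟨-, hψ_pos, -, hψ_rep⟩ := hψ
  have ha0 : 0 < a := zero_lt_one.trans_le ha
  have hnorm : (fun A : {A : Matrix (Fin n) (Fin n) ℝ // A.det ≠ 0} =>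
        Real.log ((matOpNorm volume a b ψ ζ A.1).toReal) / Real.log |A.1.det|) =
      (fun s => Real.log (fundE a b ν (ENNReal.ofReal s)).toReal / Real.log s) ∘
        fun A => |A.1.det| := by
    funext A
    rw [Function.comp_apply, matOpNorm_eq_fundE ha0.le (expSet_nonempty hab) hψ_pos hψ_rep hmul A.2]
  rw [hnorm]
  exact ⟨(tendsto_log_fundE_div_log_atTop ha0 hab hν.2.1).comp tendsto_comap,
    (tendsto_log_fundE_div_log_nhdsGT_zero ha0.le hab hν.2.1).comp tendsto_comap⟩

/-- Let `X = ℝ^n` with Lebesgue measure, `ψ ∈ Ψ(a,b)`, `ζ, ν ∈ EΨ(a,b)`,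
`ζ = ψ·ν`. Then, as `A` ranges over non-degenerate `n×n` matrices,
`log ‖D_A‖(G(ψ)→G(ζ)) / log |det A| → 1/a` as `|det A| → ∞`, and
`log ‖D_A‖(G(ψ)→G(ζ)) / log |det A| → 1/b` as `|det A| → 0` (so `0` when `b = ∞`). -/
theorem matrix_dilation_log_opNorm_limits (n : ℕ)
    (a : ℝ) (b : ℝ≥0∞) (ha : 1 ≤ a) (hab : ENNReal.ofReal a < b)
    (ψ ζ ν : ℝ → ℝ) (hψ : IsPsi (volume : Measure (Fin n → ℝ)) a b ψ)
    (hζ : IsEPsi a b ζ) (hν : IsEPsi a b ν)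
    (hmul : ∀ p ∈ expSet a b, ζ p = ψ p * ν p) :
    Tendsto
        (fun A : {A : Matrix (Fin n) (Fin n) ℝ // A.det ≠ 0} =>
          Real.log ((matOpNorm (volume : Measure (Fin n → ℝ)) a b ψ ζ A.1).toReal) /
            Real.log |A.1.det|)
        (Filter.comap (fun A : {A : Matrix (Fin n) (Fin n) ℝ // A.det ≠ 0} => |A.1.det|)
          atTop)
        (𝓝 (1 / a)) ∧
      Tendsto
        (fun A : {A : Matrix (Fin n) (Fin n) ℝ // A.det ≠ 0} =>
          Real.log ((matOpNorm (volume : Measure (Fin n → ℝ)) a b ψ ζ A.1).toReal) /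
            Real.log |A.1.det|)
        (Filter.comap (fun A : {A : Matrix (Fin n) (Fin n) ℝ // A.det ≠ 0} => |A.1.det|)
          (𝓝[>] (0 : ℝ)))
        (𝓝 (b⁻¹.toReal)) :=
  matrix_dilation_log_opNorm_limits_general n a b ha hab ψ ζ ν hψ hν hmul
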